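/- arXiv:1503.05124 — 8 statements merged into one kernel-verified Lean document; each statement's English description precedes it below -/
import Mathlib

section
/- Let L and L' be complete lattices and g : L' → L be monotone and surjective. Then g is locally completely additive if and only if for all x ∈ L, the supremum of the preimage g⁻¹(x) belongs to g⁻¹(x). -/
/-- A monotone function between complete lattices is locally completely additive
if whenever it maps every element of a nonempty set to the same x,
it maps the supremum of the set to x. -/
def LocallyCompletelyAdditive {L' L : Type*} [CompleteLattice L'] [CompleteLattice L]
    (h : L' → L) : Prop :=
  ∀ Y : Set L', Y.Nonempty → ∀ x : L, (∀ y ∈ Y, h y = x) → h (sSup Y) = x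

/-- A monotone surjective g is locally completely additive iff
for all x the supremum of the preimage of x belongs to the preimage. -/
theorem lca_iff_sSup_preimage_mem
    {L' L : Type*} [CompleteLattice L'] [CompleteLattice L]
    (g : L' → L) (mg : Monotone g) (sg : Function.Surjective g) :
    LocallyCompletelyAdditive g ↔ ∀ x : L, sSup (g ⁻¹' {x}) ∈ g ⁻¹' {x} := by
  constructor
  · intro h x
    obtain ⟨y, hy⟩ := sg x
    exact h (g ⁻¹' {x}) ⟨y, hy⟩ x (fun y hy => hy)
  · intro h Y ⟨y0, hy0⟩ x hx
    have hsub : Y ⊆ g ⁻¹' {x} := fun y hy => hx y hy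
    have h1 : g (sSup Y) ≤ x := by
      calc g (sSup Y) ≤ g (sSup (g ⁻¹' {x})) := mg (sSup_le_sSup hsub)
        _ = x := h x
    have h2 : x ≤ g (sSup Y) := by
      calc x = g y0 := (hx y0 hy0).symm
        _ ≤ g (sSup Y) := mg (le_sSup hy0)
    exact le_antisymm h1 h2
end

section
/- Let (L_α)_{α<κ} be an inverse system of complete lattices whose projections h^α_β : L_α → L_β are all locally completely additive. Then the limit projections h^∞_β : L_∞ → L_β of the inverse limit L_∞ are also locally completely additive. -/
/-!
Given a compatible sequence `y` and an index `β`, keep `y` at and below `β` and replace each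
component above `β` by the top of the fibre over `y β`. Local complete additivity of the
projections keeps that top inside the fibre, and the Galois insertion makes the tops
compatible with one another, so the result is the greatest element of the inverse limit with
`β`-component `y β`. A least upper bound of a nonempty family with common `β`-component `x`
lies below this greatest element and above a member of the family, which pins its
`β`-component to `x`.
-/

universe u

abbrev Idx (κ : Ordinal) := {α : Ordinal // α < κ}

def Compat {κ : Ordinal} (L : Idx κ → Type u) [∀ α, CompleteLattice (L α)]
    (h : ∀ α β : Idx κ, β < α → L α → L β) : Set (∀ α, L α) :=
  {x | ∀ (α β : Idx κ) (hβα : β < α), h α β hβα (x α) = x β}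

namespace Compat

variable {κ : Ordinal} {L : Idx κ → Type u} [∀ α, CompleteLattice (L α)]
  {h : ∀ α β : Idx κ, β < α → L α → L β}

variable (h) in
noncomputable def raiseAbove (y : ∀ α, L α) (β : Idx κ) : ∀ γ, L γ :=
  fun γ => if hβγ : β < γ then sSup {w | h γ β hβγ w = y β} else y γ

lemma raiseAbove_of_lt {y : ∀ α, L α} {β γ : Idx κ} (hβγ : β < γ) :
    raiseAbove h y β γ = sSup {w | h γ β hβγ w = y β} :=
  dif_pos hβγ

lemma raiseAbove_of_not_lt {y : ∀ α, L α} {β γ : Idx κ} (hβγ : ¬β < γ) :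
    raiseAbove h y β γ = y γ :=
  dif_neg hβγ

lemma raiseAbove_self (y : ∀ α, L α) (β : Idx κ) : raiseAbove h y β β = y β :=
  raiseAbove_of_not_lt (lt_irrefl β)

lemma proj_sSup_fiber {y : ∀ α, L α} (hy : y ∈ Compat L h) {β γ : Idx κ} (hβγ : β < γ)
    (hlca : ∀ Y : Set (L γ), Y.Nonempty → ∀ x : L β,
      (∀ w ∈ Y, h γ β hβγ w = x) → h γ β hβγ (sSup Y) = x) :
    h γ β hβγ (sSup {w | h γ β hβγ w = y β}) = y β :=
  hlca _ ⟨y γ, hy γ β hβγ⟩ _ fun _ hw => hw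

lemma proj_sSup_fiber_eq_sSup_fiber {β δ γ : Idx κ} (hβδ : β < δ) (hδγ : δ < γ) {x : L β}
    (hmono : Monotone (h γ δ hδγ)) {k : L δ → L γ} (hk : ∀ w, h γ δ hδγ (k w) = w)
    (comp : ∀ w, h δ β hβδ (h γ δ hδγ w) = h γ β (hβδ.trans hδγ) w)
    (hγ : h γ β (hβδ.trans hδγ) (sSup {w | h γ β (hβδ.trans hδγ) w = x}) = x)
    (hδ : h δ β hβδ (sSup {w | h δ β hβδ w = x}) = x) :
    h γ δ hδγ (sSup {w | h γ β (hβδ.trans hδγ) w = x}) = sSup {w | h δ β hβδ w = x} := by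
  apply le_antisymm
  · refine le_sSup ?_
    change h δ β hβδ (h γ δ hδγ _) = x
    rw [comp, hγ]
  · have hlift : k (sSup {w | h δ β hβδ w = x}) ∈ {w | h γ β (hβδ.trans hδγ) w = x} := by
      change h γ β _ (k _) = x
      rw [← comp, hk, hδ]
    calc sSup {w | h δ β hβδ w = x}
        = h γ δ hδγ (k (sSup {w | h δ β hβδ w = x})) := (hk _).symm
      _ ≤ h γ δ hδγ (sSup {w | h γ β (hβδ.trans hδγ) w = x}) := hmono (le_sSup hlift)

lemma raiseAbove_mem
    (proj : ∀ (α β : Idx κ) (hβα : β < α), ∃ k : L β → L α,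
        Monotone (h α β hβα) ∧ Monotone k ∧
        (∀ x, h α β hβα (k x) = x) ∧ (∀ y, k (h α β hβα y) ≤ y))
    (comp : ∀ (α β γ : Idx κ) (hγβ : γ < β) (hβα : β < α) (x : L α),
        h β γ hγβ (h α β hβα x) = h α γ (hγβ.trans hβα) x)
    (lca : ∀ (α β : Idx κ) (hβα : β < α), ∀ Y : Set (L α), Y.Nonempty →
        ∀ x : L β, (∀ y ∈ Y, h α β hβα y = x) → h α β hβα (sSup Y) = x)
    {y : ∀ α, L α} (hy : y ∈ Compat L h) (β : Idx κ) :
    raiseAbove h y β ∈ Compat L h := by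
  intro γ δ hδγ
  by_cases hβδ : β < δ
  · have hβγ := hβδ.trans hδγ
    obtain ⟨k, hmono, -, hk, -⟩ := proj γ δ hδγ
    rw [raiseAbove_of_lt hβγ, raiseAbove_of_lt hβδ]
    exact proj_sSup_fiber_eq_sSup_fiber hβδ hδγ hmono hk (comp γ δ β hβδ hδγ)
      (proj_sSup_fiber hy hβγ (lca γ β hβγ)) (proj_sSup_fiber hy hβδ (lca δ β hβδ))
  rw [raiseAbove_of_not_lt hβδ]
  by_cases hβγ : β < γ
  · rw [raiseAbove_of_lt hβγ]
    rcases (not_lt.mp hβδ).lt_or_eq with hδβ | rfl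
    · rw [← comp γ β δ hδβ hβγ, proj_sSup_fiber hy hβγ (lca γ β hβγ), hy β δ hδβ]
    · exact proj_sSup_fiber hy hβγ (lca γ δ hβγ)
  · rw [raiseAbove_of_not_lt hβγ]
    exact hy γ δ hδγ

lemma le_raiseAbove {y z : ∀ α, L α} (hy : y ∈ Compat L h) (hz : z ∈ Compat L h)
    {β : Idx κ} (hzy : z β = y β) : z ≤ raiseAbove h y β := by
  intro γ
  rcases lt_trichotomy γ β with hγβ | rfl | hβγ
  · rw [raiseAbove_of_not_lt (lt_asymm hγβ), ← hy β γ hγβ, ← hz β γ hγβ, hzy]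
  · rw [raiseAbove_self, hzy]
  · rw [raiseAbove_of_lt hβγ]
    exact le_sSup ((hz γ β hβγ).trans hzy)

end Compat

theorem limit_projections_locally_completely_additive_general
    {κ : Ordinal}
    (L : Idx κ → Type u) [∀ α, CompleteLattice (L α)]
    (h : ∀ α β : Idx κ, β < α → L α → L β)
    (proj : ∀ (α β : Idx κ) (hβα : β < α), ∃ k : L β → L α,
        Monotone (h α β hβα) ∧ Monotone k ∧
        (∀ x, h α β hβα (k x) = x) ∧ (∀ y, k (h α β hβα y) ≤ y))
    (comp : ∀ (α β γ : Idx κ) (hγβ : γ < β) (hβα : β < α) (x : L α),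
        h β γ hγβ (h α β hβα x) = h α γ (hγβ.trans hβα) x)
    (lca : ∀ (α β : Idx κ) (hβα : β < α), ∀ Y : Set (L α), Y.Nonempty →
        ∀ x : L β, (∀ y ∈ Y, h α β hβα y = x) → h α β hβα (sSup Y) = x) :
    ∀ β : Idx κ, ∀ Y ⊆ Compat L h, Y.Nonempty →
      ∀ x : L β, (∀ y ∈ Y, y β = x) →
      ∀ z, IsLeast {u ∈ Compat L h | ∀ y ∈ Y, y ≤ u} z → z β = x := by
  rintro β Y hY ⟨y₀, hy₀⟩ x hx z hz
  have hupper : Compat.raiseAbove h y₀ β ∈ {u ∈ Compat L h | ∀ y ∈ Y, y ≤ u} :=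
    ⟨Compat.raiseAbove_mem proj comp lca (hY hy₀) β, fun y hy =>
      Compat.le_raiseAbove (hY hy₀) (hY hy) ((hx y hy).trans (hx y₀ hy₀).symm)⟩
  apply le_antisymm
  · calc z β ≤ Compat.raiseAbove h y₀ β β := hz.2 hupper β
      _ = x := (Compat.raiseAbove_self y₀ β).trans (hx y₀ hy₀)
  · exact hx y₀ hy₀ ▸ hz.1.2 y₀ hy₀ β

/-- if the projections of the inverse system are locally completely
additive, then so are the limit projections (evaluations at a component): whenever a
nonempty family of compatible sequences all have β-component x, any least upper
bound of the family inside the inverse limit has β-component x. -/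
theorem limit_projections_locally_completely_additive
    {κ : Ordinal} (hκ : Order.IsSuccLimit κ)
    (L : Idx κ → Type u) [∀ α, CompleteLattice (L α)]
    (h : ∀ α β : Idx κ, β < α → L α → L β)
    (proj : ∀ (α β : Idx κ) (hβα : β < α), ∃ k : L β → L α,
        Monotone (h α β hβα) ∧ Monotone k ∧
        (∀ x, h α β hβα (k x) = x) ∧ (∀ y, k (h α β hβα y) ≤ y))
    (comp : ∀ (α β γ : Idx κ) (hγβ : γ < β) (hβα : β < α) (x : L α),
        h β γ hγβ (h α β hβα x) = h α γ (hγβ.trans hβα) x)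
    (lca : ∀ (α β : Idx κ) (hβα : β < α), ∀ Y : Set (L α), Y.Nonempty →
        ∀ x : L β, (∀ y ∈ Y, h α β hβα y = x) → h α β hβα (sSup Y) = x) :
    ∀ β : Idx κ, ∀ Y ⊆ Compat L h, Y.Nonempty →
      ∀ x : L β, (∀ y ∈ Y, y β = x) →
      ∀ z, IsLeast {u ∈ Compat L h | ∀ y ∈ Y, y ≤ u} z → z β = x :=
  limit_projections_locally_completely_additive_general L h proj comp lca
end

section
/- Let (L_α)_{α<κ} be an inverse system of complete lattices with locally completely additive projections h^α_β, and limit L_∞. Let L be a complete lattice with a cone of locally completely additive projections g_α : L → L_α with corresponding embeddings f_α : L_α → L. Then the mediating map g : L → L_∞, y ↦ (g_α(y))_α, is a projection, and its corresponding embedding f : L_∞ → L is given by f((x_α)_α) = ⨆_{α<κ} f_α(x_α). In particular, for every compatible sequence (x_α)_α, ⨅{y ∈ L : ∀α, x_α ≤ g_α(y)} = ⨆_{α<κ} f_α(x_α). -/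
universe u

/-!
For a compatible `x`, the elements `f_γ (x_γ)` form an increasing chain in `LL`, so their
supremum is also the supremum of the tail `γ ≥ α`. Every element of that tail is sent to `x_α`
by `g_α`, hence so is the supremum, by local complete additivity of `g_α`. This makes
`x ↦ ⨆_γ f_γ (x_γ)` a right inverse of the mediating map, and it is the least `y` with
`x ≤ (g_α y)_α` because each `f_α` is the lower adjoint of `g_α`.
-/

theorem Monotone.iSup_eq_sSup_image_Ici {ι α : Type*} [LinearOrder ι] [CompleteLattice α]
    {F : ι → α} (hF : Monotone F) (i : ι) : ⨆ j, F j = sSup (F '' Set.Ici i) := by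
  refine le_antisymm (iSup_le fun j => ?_) (sSup_le ?_)
  · exact (hF le_sup_right).trans (le_sSup ⟨i ⊔ j, le_sup_left, rfl⟩)
  · rintro _ ⟨j, -, rfl⟩
    exact le_iSup F j

section Cone

variable {κ : Ordinal} {L : Idx κ → Type u} [∀ α, CompleteLattice (L α)]
  {h : ∀ α β : Idx κ, β < α → L α → L β}
  {LL : Type*} {g : ∀ α : Idx κ, LL → L α} {f : ∀ α : Idx κ, L α → LL}

theorem mediating_mem_compat
    (cone : ∀ (α β : Idx κ) (hβα : β < α) (y : LL), h α β hβα (g α y) = g β y) (y : LL) :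
    (fun α => g α y) ∈ Compat L h :=
  fun α β hβα => cone α β hβα y

theorem g_embed_eq_of_le
    (gf : ∀ α (x : L α), g α (f α x) = x)
    (cone : ∀ (α β : Idx κ) (hβα : β < α) (y : LL), h α β hβα (g α y) = g β y)
    {x : ∀ α, L α} (hx : x ∈ Compat L h) {β α : Idx κ} (hβα : β ≤ α) :
    g β (f α (x α)) = x β := by
  rcases hβα.eq_or_lt with rfl | hlt
  · exact gf β (x β)
  · rw [← cone α β hlt, gf]
    exact hx α β hlt

theorem monotone_embed_of_mem_compat
    [CompleteLattice LL]
    (gf : ∀ α (x : L α), g α (f α x) = x) (fg : ∀ α (y : LL), f α (g α y) ≤ y)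
    (cone : ∀ (α β : Idx κ) (hβα : β < α) (y : LL), h α β hβα (g α y) = g β y)
    {x : ∀ α, L α} (hx : x ∈ Compat L h) : Monotone fun γ => f γ (x γ) := by
  intro γ α hγα
  calc f γ (x γ) = f γ (g γ (f α (x α))) := by rw [g_embed_eq_of_le gf cone hx hγα]
    _ ≤ f α (x α) := fg γ _

theorem g_iSup_embed_eq
    [CompleteLattice LL]
    (gf : ∀ α (x : L α), g α (f α x) = x) (fg : ∀ α (y : LL), f α (g α y) ≤ y)
    (glca : ∀ α : Idx κ, ∀ Y : Set LL, Y.Nonempty →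
        ∀ x : L α, (∀ y ∈ Y, g α y = x) → g α (sSup Y) = x)
    (cone : ∀ (α β : Idx κ) (hβα : β < α) (y : LL), h α β hβα (g α y) = g β y)
    {x : ∀ α, L α} (hx : x ∈ Compat L h) (α : Idx κ) :
    g α (⨆ γ, f γ (x γ)) = x α := by
  rw [(monotone_embed_of_mem_compat gf fg cone hx).iSup_eq_sSup_image_Ici α]
  refine glca α _ (Set.nonempty_Ici.image _) (x α) ?_
  rintro _ ⟨γ, hαγ, rfl⟩
  exact g_embed_eq_of_le gf cone hx hαγ

theorem sInf_le_g_eq_iSup_embed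
    [CompleteLattice LL]
    (fmono : ∀ α, Monotone (f α)) (fg : ∀ α (y : LL), f α (g α y) ≤ y)
    {x : ∀ α, L α} (hgx : ∀ α, g α (⨆ γ, f γ (x γ)) = x α) :
    sInf {y : LL | ∀ α, x α ≤ g α y} = ⨆ γ, f γ (x γ) := by
  refine le_antisymm (sInf_le fun α => (hgx α).ge) (le_sInf fun y hy => ?_)
  exact iSup_le fun γ => (fmono γ (hy γ)).trans (fg γ y)

end Cone

theorem mediating_projection_of_lca_general
    {κ : Ordinal}
    (L : Idx κ → Type u) [∀ α, CompleteLattice (L α)]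
    (h : ∀ α β : Idx κ, β < α → L α → L β)
    (LL : Type u) [CompleteLattice LL]
    (g : ∀ α : Idx κ, LL → L α) (f : ∀ α : Idx κ, L α → LL)
    (gmono : ∀ α, Monotone (g α)) (fmono : ∀ α, Monotone (f α))
    (gf : ∀ α (x : L α), g α (f α x) = x) (fg : ∀ α (y : LL), f α (g α y) ≤ y)
    (glca : ∀ α : Idx κ, ∀ Y : Set LL, Y.Nonempty →
        ∀ x : L α, (∀ y ∈ Y, g α y = x) → g α (sSup Y) = x)
    (cone : ∀ (α β : Idx κ) (hβα : β < α) (y : LL), h α β hβα (g α y) = g β y) :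
    (∀ y : LL, (fun α => g α y) ∈ Compat L h) ∧
    Monotone (fun (y : LL) (α : Idx κ) => g α y) ∧
    (∀ x ∈ Compat L h, ∀ x' ∈ Compat L h, x ≤ x' →
        (⨆ γ : Idx κ, f γ (x γ)) ≤ ⨆ γ : Idx κ, f γ (x' γ)) ∧
    (∀ x ∈ Compat L h, ∀ α : Idx κ, g α (⨆ γ : Idx κ, f γ (x γ)) = x α) ∧
    (∀ y : LL, (⨆ γ : Idx κ, f γ (g γ y)) ≤ y) ∧
    (∀ x ∈ Compat L h,
        sInf {y : LL | ∀ α : Idx κ, x α ≤ g α y} = ⨆ γ : Idx κ, f γ (x γ)) := by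
  have hgx := fun x (hx : x ∈ Compat L h) => g_iSup_embed_eq gf fg glca cone hx
  refine ⟨mediating_mem_compat cone, fun y y' hy α => gmono α hy,
    fun x _ x' _ hxx' => iSup_mono fun γ => fmono γ (hxx' γ), hgx,
    fun y => iSup_le fun γ => fg γ y,
    fun x hx => sInf_le_g_eq_iSup_embed fmono fg (hgx x hx)⟩

/-- given a cone of locally completely additive projections
g_α : LL → L_α (with embeddings f_α) over an inverse system with locally completely
additive projections, the mediating map g : LL → L_∞ is a projection whose embedding
is f((x_α)_α) = ⨆_α f_α (x_α); in particular
⨅ {y : ∀ α, x_α ≤ g_α y} = ⨆_α f_α (x_α) for every compatible sequence. -/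
theorem mediating_projection_of_lca
    {κ : Ordinal} (hκ : Order.IsSuccLimit κ)
    (L : Idx κ → Type u) [∀ α, CompleteLattice (L α)]
    (h : ∀ α β : Idx κ, β < α → L α → L β)
    (proj : ∀ (α β : Idx κ) (hβα : β < α), ∃ k : L β → L α,
        Monotone (h α β hβα) ∧ Monotone k ∧
        (∀ x, h α β hβα (k x) = x) ∧ (∀ y, k (h α β hβα y) ≤ y))
    (comp : ∀ (α β γ : Idx κ) (hγβ : γ < β) (hβα : β < α) (x : L α),
        h β γ hγβ (h α β hβα x) = h α γ (hγβ.trans hβα) x)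
    (lca : ∀ (α β : Idx κ) (hβα : β < α), ∀ Y : Set (L α), Y.Nonempty →
        ∀ x : L β, (∀ y ∈ Y, h α β hβα y = x) → h α β hβα (sSup Y) = x)
    (LL : Type u) [CompleteLattice LL]
    (g : ∀ α : Idx κ, LL → L α) (f : ∀ α : Idx κ, L α → LL)
    (gmono : ∀ α, Monotone (g α)) (fmono : ∀ α, Monotone (f α))
    (gf : ∀ α (x : L α), g α (f α x) = x) (fg : ∀ α (y : LL), f α (g α y) ≤ y)
    (glca : ∀ α : Idx κ, ∀ Y : Set LL, Y.Nonempty →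
        ∀ x : L α, (∀ y ∈ Y, g α y = x) → g α (sSup Y) = x)
    (cone : ∀ (α β : Idx κ) (hβα : β < α) (y : LL), h α β hβα (g α y) = g β y) :
    (∀ y : LL, (fun α => g α y) ∈ Compat L h) ∧
    Monotone (fun (y : LL) (α : Idx κ) => g α y) ∧
    (∀ x ∈ Compat L h, ∀ x' ∈ Compat L h, x ≤ x' →
        (⨆ γ : Idx κ, f γ (x γ)) ≤ ⨆ γ : Idx κ, f γ (x' γ)) ∧
    (∀ x ∈ Compat L h, ∀ α : Idx κ, g α (⨆ γ : Idx κ, f γ (x γ)) = x α) ∧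
    (∀ y : LL, (⨆ γ : Idx κ, f γ (g γ y)) ≤ y) ∧
    (∀ x ∈ Compat L h,
        sInf {y : LL | ∀ α : Idx κ, x α ≤ g α y} = ⨆ γ : Idx κ, f γ (x γ)) :=
  mediating_projection_of_lca_general L h LL g f gmono fmono gf fg glca cone
end

section
/- Let L be a stratified complete lattice satisfying axioms A1, A2, A3, and A4. Then for every x ∈ L, x = ⨆_{α<κ} x|_α. -/
/-!
Restrictions increase with the level: for `β ≤ γ`, `x|_γ` is `=_γ`-equivalent to `x`, hence
`=_β`-equivalent to it by A1, so it lies above the least element `x|_β` of that class. Since `κ` is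
a limit, the supremum of all restrictions of `x` is therefore already the supremum of those of
level above any fixed `α < κ`, and these are all `=_α`-equivalent to `x` (A1 again). By A4 the
supremum is `=_α`-equivalent to `x` for every `α`, so A2 makes it equal to `x`.
-/

open Set

theorem sSup_image_Iio_eq_sSup_image_Ioo {ι L : Type*} [LinearOrder ι] [CompleteLattice L]
    {f : ι → L} {a b k : ι} (hf : MonotoneOn f (Iio k)) (hab : a < b) (hbk : b < k) :
    sSup (f '' Iio k) = sSup (f '' Ioo a k) := by
  refine le_antisymm (sSup_le ?_) (sSup_le_sSup (image_mono Ioo_subset_Iio_self))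
  rintro _ ⟨c, hck, rfl⟩
  rcases le_or_gt c a with hca | hac
  · calc f c ≤ f b := hf hck hbk (hca.trans hab.le)
      _ ≤ sSup (f '' Ioo a k) := le_sSup (mem_image_of_mem f ⟨hab, hbk⟩)
  · exact le_sSup (mem_image_of_mem f ⟨hac, hck⟩)

section Restriction

variable {κ : Ordinal} {L : Type*} [CompleteLattice L] {r : Ordinal → L → L → Prop}
  {res : Ordinal → L → L}

theorem res_equiv_of_lt
    (A1 : ∀ α β : Ordinal, α < β → β < κ → ∀ x y : L, r β x y → r α x y ∧ r α y x)
    (A3 : ∀ α < κ, ∀ x : L, (r α x (res α x) ∧ r α (res α x) x) ∧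
        ∀ z : L, r α x z → res α x ≤ z)
    {α β : Ordinal} (hαβ : α < β) (hβ : β < κ) (x : L) :
    r α x (res β x) ∧ r α (res β x) x :=
  A1 α β hαβ hβ x (res β x) (A3 β hβ x).1.1

theorem res_monotoneOn
    (A1 : ∀ α β : Ordinal, α < β → β < κ → ∀ x y : L, r β x y → r α x y ∧ r α y x)
    (A3 : ∀ α < κ, ∀ x : L, (r α x (res α x) ∧ r α (res α x) x) ∧
        ∀ z : L, r α x z → res α x ≤ z)
    (x : L) : MonotoneOn (fun α => res α x) (Iio κ) := by
  intro β hβ γ hγ hβγ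
  rcases hβγ.eq_or_lt with rfl | hlt
  · exact le_rfl
  · exact (A3 β hβ x).2 _ (res_equiv_of_lt A1 A3 hlt hγ x).1

end Restriction

theorem eq_sSup_restrictions_general
    {κ : Ordinal} (hκ : Order.IsSuccLimit κ) {L : Type*} [CompleteLattice L]
    (r : Ordinal → L → L → Prop)
    (A1 : ∀ α β : Ordinal, α < β → β < κ → ∀ x y : L, r β x y → r α x y ∧ r α y x)
    (A2 : ∀ x y : L, (∀ α < κ, r α x y ∧ r α y x) → x = y)
    (res : Ordinal → L → L)
    (A3 : ∀ α < κ, ∀ x : L, (r α x (res α x) ∧ r α (res α x) x) ∧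
        ∀ z : L, r α x z → res α x ≤ z)
    (A4 : ∀ α < κ, ∀ (X : Set L) (y : L), X.Nonempty →
        (∀ x ∈ X, r α x y ∧ r α y x) → r α (sSup X) y ∧ r α y (sSup X)) :
    ∀ x : L, x = sSup ((fun α => res α x) '' Set.Iio κ) := by
  intro x
  refine A2 _ _ fun α hα => ?_
  have hsucc : Order.succ α < κ := hκ.succ_lt hα
  rw [sSup_image_Iio_eq_sSup_image_Ioo (res_monotoneOn A1 A3 x) (Order.lt_succ α) hsucc]
  have hne : ((fun β => res β x) '' Ioo α κ).Nonempty :=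
    ⟨_, mem_image_of_mem _ ⟨Order.lt_succ α, hsucc⟩⟩
  refine (A4 α hα _ x hne ?_).symm
  rintro _ ⟨β, ⟨hαβ, hβ⟩, rfl⟩
  exact (res_equiv_of_lt A1 A3 hαβ hβ x).symm

/-- in a stratified complete lattice satisfying A1–A4,
every x equals the supremum of its restrictions: x = ⨆_{α<κ} x|_α. -/
theorem eq_sSup_restrictions
    {κ : Ordinal} (hκ : Order.IsSuccLimit κ) {L : Type*} [CompleteLattice L]
    (r : Ordinal → L → L → Prop)
    (hrefl : ∀ α < κ, ∀ x : L, r α x x)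
    (htrans : ∀ α < κ, ∀ x y z : L, r α x y → r α y z → r α x z)
    (A1 : ∀ α β : Ordinal, α < β → β < κ → ∀ x y : L, r β x y → r α x y ∧ r α y x)
    (A2 : ∀ x y : L, (∀ α < κ, r α x y ∧ r α y x) → x = y)
    (res : Ordinal → L → L)
    (A3 : ∀ α < κ, ∀ x : L, (r α x (res α x) ∧ r α (res α x) x) ∧
        ∀ z : L, r α x z → res α x ≤ z)
    (A4 : ∀ α < κ, ∀ (X : Set L) (y : L), X.Nonempty →
        (∀ x ∈ X, r α x y ∧ r α y x) → r α (sSup X) y ∧ r α y (sSup X)) :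
    ∀ x : L, x = sSup ((fun α => res α x) '' Set.Iio κ) :=
  eq_sSup_restrictions_general hκ r A1 A2 res A3 A4
end

section
/- Let L be a strong model (a model satisfying the strengthened axiom A4*). Then for all X ⊆ L and α < κ, (⨆ X)|_α = ⨆ {x|_α : x ∈ X}. -/
/-!
By A4* the supremum of `X` is `=_α`-equivalent to the supremum of the restrictions `x|_α`,
so minimality of `(⨆ X)|_α` in its `=_α`-class gives `(⨆ X)|_α ≤ ⨆ x|_α`; the reverse
inequality is monotonicity of restriction (A5).
-/

universe u

section LeastRepresentative

variable {L : Type u} [CompleteLattice L] (r : L → L → Prop) (ρ : L → L)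

theorem map_iSup_le_of_least {ι : Type u}
    (hρ : ∀ x, r x (ρ x) ∧ r (ρ x) x) (hleast : ∀ x z, r x z → ρ x ≤ z)
    (hsup : ∀ xs ys : ι → L, (∀ i, r (xs i) (ys i) ∧ r (ys i) (xs i)) →
      r (⨆ i, xs i) (⨆ i, ys i) ∧ r (⨆ i, ys i) (⨆ i, xs i))
    (xs : ι → L) : ρ (⨆ i, xs i) ≤ ⨆ i, ρ (xs i) :=
  hleast _ _ (hsup xs (ρ ∘ xs) fun i => hρ (xs i)).1

theorem map_sSup_eq_of_least (hmono : Monotone ρ)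
    (hρ : ∀ x, r x (ρ x) ∧ r (ρ x) x) (hleast : ∀ x z, r x z → ρ x ≤ z)
    (hsup : ∀ (I : Type u) (xs ys : I → L), (∀ i, r (xs i) (ys i) ∧ r (ys i) (xs i)) →
      r (⨆ i, xs i) (⨆ i, ys i) ∧ r (⨆ i, ys i) (⨆ i, xs i))
    (X : Set L) : ρ (sSup X) = sSup (ρ '' X) := by
  refine le_antisymm ?_ (sSup_image (f := ρ) ▸ hmono.le_map_sSup)
  rw [sSup_eq_iSup', sSup_image', ← Function.comp_def]
  exact map_iSup_le_of_least r ρ hρ hleast (hsup X) _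

end LeastRepresentative

theorem strong_model_res_sSup_general
    {κ : Ordinal} {L : Type u} [CompleteLattice L]
    (r : Ordinal → L → L → Prop)
    (res : Ordinal → L → L)
    (A3 : ∀ α < κ, ∀ x : L, (r α x (res α x) ∧ r α (res α x) x) ∧
        ∀ z : L, r α x z → res α x ≤ z)
    (A4s : ∀ α < κ, ∀ (I : Type u) (xs ys : I → L),
        (∀ i, r α (xs i) (ys i) ∧ r α (ys i) (xs i)) →
        r α (⨆ i, xs i) (⨆ i, ys i) ∧ r α (⨆ i, ys i) (⨆ i, xs i))
    (A5 : ∀ α < κ, ∀ x y : L, x ≤ y → res α x ≤ res α y) :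
    ∀ (X : Set L), ∀ α < κ, res α (sSup X) = sSup ((fun x => res α x) '' X) := by
  intro X α hα
  exact map_sSup_eq_of_least (r α) (res α) (fun _ _ => A5 α hα _ _)
    (fun x => (A3 α hα x).1) (fun x => (A3 α hα x).2) (A4s α hα) X

/-- in a strong model (A1, A2, A3, A4*, A5, A6), restriction commutes
with arbitrary suprema: (⨆ X)|_α = ⨆ {x|_α : x ∈ X} for all X ⊆ L, α < κ. -/
theorem strong_model_res_sSup
    {κ : Ordinal} (hκ : Order.IsSuccLimit κ) {L : Type u} [CompleteLattice L]
    (r : Ordinal → L → L → Prop)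
    (hrefl : ∀ α < κ, ∀ x : L, r α x x)
    (htrans : ∀ α < κ, ∀ x y z : L, r α x y → r α y z → r α x z)
    (A1 : ∀ α β : Ordinal, α < β → β < κ → ∀ x y : L, r β x y → r α x y ∧ r α y x)
    (A2 : ∀ x y : L, (∀ α < κ, r α x y ∧ r α y x) → x = y)
    (res : Ordinal → L → L)
    (A3 : ∀ α < κ, ∀ x : L, (r α x (res α x) ∧ r α (res α x) x) ∧
        ∀ z : L, r α x z → res α x ≤ z)
    (A4s : ∀ α < κ, ∀ (I : Type u) (xs ys : I → L),
        (∀ i, r α (xs i) (ys i) ∧ r α (ys i) (xs i)) →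
        r α (⨆ i, xs i) (⨆ i, ys i) ∧ r α (⨆ i, ys i) (⨆ i, xs i))
    (A5 : ∀ α < κ, ∀ x y : L, x ≤ y → res α x ≤ res α y)
    (A6 : ∀ α < κ, ∀ x y : L, x ≤ y → (∀ β < α, r β x y ∧ r β y x) → r α x y) :
    ∀ (X : Set L), ∀ α < κ, res α (sSup X) = sSup ((fun x => res α x) '' X) :=
  strong_model_res_sSup_general r res A3 A4s A5
end

section
/- Let (L,≤) be a complete lattice equipped with functions |_α : L → L for each α < κ satisfying B1: (x|_α)|_β = x|_β for β ≤ α; B2: x ≤ y implies x|_α ≤ y|_α; B3: x = ⨆_{α<κ} x|_α; B4: if x_i|_α = y for all i in a nonempty I, then (⨆ x_i)|_α = y. Define x ⊑_α y iff x|_α ≤ y|_α and x|_β = y|_β for all β < α. Then L with these preorders is a model satisfying A1–A6, and x|_α coincides with the element given by A3 (i.e., x|_α =_α x and x ⊑_α z implies x|_α ≤ z). -/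
/-!
Two elements are `=_α`-equivalent exactly when all their restrictions `|_β` with `β ≤ α`
agree. With this description A1 and A6 are immediate and A5 is B2; A2 and the minimality in
A3 come from B3 (an element is the join of its restrictions, so `x|_α ≤ x`), the equivalence
`x|_α =_α x` from B1, and A4 from B4 applied at every `β ≤ α`.
-/

/-- The preorder ⊑_α defined from the restriction operations (condition D). -/
def rOf {L : Type*} [CompleteLattice L] (res : Ordinal → L → L)
    (α : Ordinal) (x y : L) : Prop :=
  res α x ≤ res α y ∧ ∀ β < α, res β x = res β y

namespace rOf

variable {L : Type*} [CompleteLattice L] {res : Ordinal → L → L} {α : Ordinal}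

theorem refl (x : L) : rOf res α x x :=
  ⟨le_rfl, fun _ _ => rfl⟩

theorem trans {x y z : L} (hxy : rOf res α x y) (hyz : rOf res α y z) : rOf res α x z :=
  ⟨hxy.1.trans hyz.1, fun β hβ => (hxy.2 β hβ).trans (hyz.2 β hβ)⟩

theorem and_symm_iff {x y : L} :
    rOf res α x y ∧ rOf res α y x ↔ ∀ β ≤ α, res β x = res β y := by
  constructor
  · rintro ⟨hxy, hyx⟩ β hβ
    rcases hβ.lt_or_eq with hβ | rfl
    · exact hxy.2 β hβ
    · exact le_antisymm hxy.1 hyx.1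
  · intro h
    exact ⟨⟨(h α le_rfl).le, fun β hβ => h β hβ.le⟩,
      ⟨(h α le_rfl).ge, fun β hβ => (h β hβ.le).symm⟩⟩

theorem and_symm_of_lt {β : Ordinal} (hαβ : α < β) {x y : L} (h : rOf res β x y) :
    rOf res α x y ∧ rOf res α y x :=
  and_symm_iff.2 fun γ hγ => h.2 γ (hγ.trans_lt hαβ)

end rOf

section Restriction

variable {L : Type*} [CompleteLattice L] {res : Ordinal → L → L} {κ : Ordinal}

theorem res_le_self (B3 : ∀ x : L, x = sSup ((fun α => res α x) '' Set.Iio κ))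
    {α : Ordinal} (hα : α < κ) (x : L) : res α x ≤ x := by
  conv_rhs => rw [B3 x]
  exact le_sSup ⟨α, hα, rfl⟩

theorem eq_of_forall_res_eq (B3 : ∀ x : L, x = sSup ((fun α => res α x) '' Set.Iio κ))
    {x y : L} (h : ∀ α < κ, res α x = res α y) : x = y := by
  rw [B3 x, B3 y]
  exact congrArg sSup (Set.image_congr fun α hα => h α hα)

theorem rOf_res_and_symm (B1 : ∀ α < κ, ∀ β ≤ α, ∀ x : L, res β (res α x) = res β x)
    {α : Ordinal} (hα : α < κ) (x : L) :
    rOf res α x (res α x) ∧ rOf res α (res α x) x :=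
  rOf.and_symm_iff.2 fun β hβ => (B1 α hα β hβ x).symm

theorem rOf_sSup_and_symm
    (B4 : ∀ α < κ, ∀ (X : Set L) (y : L), X.Nonempty →
      (∀ x ∈ X, res α x = y) → res α (sSup X) = y)
    {α : Ordinal} (hα : α < κ) {X : Set L} {y : L} (hX : X.Nonempty)
    (h : ∀ x ∈ X, rOf res α x y ∧ rOf res α y x) :
    rOf res α (sSup X) y ∧ rOf res α y (sSup X) :=
  rOf.and_symm_iff.2 fun β hβ =>
    B4 β (hβ.trans_lt hα) X _ hX fun x hx => rOf.and_symm_iff.1 (h x hx) β hβ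

end Restriction

theorem model_of_B_axioms_general
    {κ : Ordinal} {L : Type*} [CompleteLattice L]
    (res : Ordinal → L → L)
    (B1 : ∀ α < κ, ∀ β ≤ α, ∀ x : L, res β (res α x) = res β x)
    (B2 : ∀ α < κ, ∀ x y : L, x ≤ y → res α x ≤ res α y)
    (B3 : ∀ x : L, x = sSup ((fun α => res α x) '' Set.Iio κ))
    (B4 : ∀ α < κ, ∀ (X : Set L) (y : L), X.Nonempty →
        (∀ x ∈ X, res α x = y) → res α (sSup X) = y) :
    -- the relations ⊑_α are preorders
    (∀ α < κ, ∀ x : L, rOf res α x x) ∧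
    (∀ α < κ, ∀ x y z : L, rOf res α x y → rOf res α y z → rOf res α x z) ∧
    -- A1
    (∀ α β : Ordinal, α < β → β < κ → ∀ x y : L,
        rOf res β x y → rOf res α x y ∧ rOf res α y x) ∧
    -- A2
    (∀ x y : L, (∀ α < κ, rOf res α x y ∧ rOf res α y x) → x = y) ∧
    -- A3 together with condition C
    (∀ α < κ, ∀ x : L, (rOf res α x (res α x) ∧ rOf res α (res α x) x) ∧
        ∀ z : L, rOf res α x z → res α x ≤ z) ∧
    -- A4
    (∀ α < κ, ∀ (X : Set L) (y : L), X.Nonempty →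
        (∀ x ∈ X, rOf res α x y ∧ rOf res α y x) →
        rOf res α (sSup X) y ∧ rOf res α y (sSup X)) ∧
    -- A5
    (∀ α < κ, ∀ x y : L, x ≤ y → res α x ≤ res α y) ∧
    -- A6
    (∀ α < κ, ∀ x y : L, x ≤ y → (∀ β < α, rOf res β x y ∧ rOf res β y x) →
        rOf res α x y) := by
  refine ⟨fun _ _ => rOf.refl, fun _ _ _ _ _ => rOf.trans,
    fun _ _ hαβ _ _ _ => rOf.and_symm_of_lt hαβ, ?A2, ?A3,
    fun _ hα _ _ => rOf_sSup_and_symm B4 hα, B2, ?A6⟩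
  case A2 =>
    intro x y h
    exact eq_of_forall_res_eq B3 fun α hα => rOf.and_symm_iff.1 (h α hα) α le_rfl
  case A3 =>
    intro α hα x
    exact ⟨rOf_res_and_symm B1 hα x, fun z hxz => hxz.1.trans (res_le_self B3 hα z)⟩
  case A6 =>
    intro α hα x y hxy h
    exact ⟨B2 α hα x y hxy, fun β hβ => rOf.and_symm_iff.1 (h β hβ) β le_rfl⟩

/-- a complete lattice with restriction operations |_α satisfying
B1–B4, with preorders ⊑_α defined by D, is a model satisfying A1–A6, and the given
|_α coincides with the element given by A3 (condition C). -/
theorem model_of_B_axioms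
    {κ : Ordinal} (hκ : Order.IsSuccLimit κ) {L : Type*} [CompleteLattice L]
    (res : Ordinal → L → L)
    (B1 : ∀ α < κ, ∀ β ≤ α, ∀ x : L, res β (res α x) = res β x)
    (B2 : ∀ α < κ, ∀ x y : L, x ≤ y → res α x ≤ res α y)
    (B3 : ∀ x : L, x = sSup ((fun α => res α x) '' Set.Iio κ))
    (B4 : ∀ α < κ, ∀ (X : Set L) (y : L), X.Nonempty →
        (∀ x ∈ X, res α x = y) → res α (sSup X) = y) :
    -- the relations ⊑_α are preorders
    (∀ α < κ, ∀ x : L, rOf res α x x) ∧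
    (∀ α < κ, ∀ x y z : L, rOf res α x y → rOf res α y z → rOf res α x z) ∧
    -- A1
    (∀ α β : Ordinal, α < β → β < κ → ∀ x y : L,
        rOf res β x y → rOf res α x y ∧ rOf res α y x) ∧
    -- A2
    (∀ x y : L, (∀ α < κ, rOf res α x y ∧ rOf res α y x) → x = y) ∧
    -- A3 together with condition C
    (∀ α < κ, ∀ x : L, (rOf res α x (res α x) ∧ rOf res α (res α x) x) ∧
        ∀ z : L, rOf res α x z → res α x ≤ z) ∧
    -- A4
    (∀ α < κ, ∀ (X : Set L) (y : L), X.Nonempty →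
        (∀ x ∈ X, rOf res α x y ∧ rOf res α y x) →
        rOf res α (sSup X) y ∧ rOf res α y (sSup X)) ∧
    -- A5
    (∀ α < κ, ∀ x y : L, x ≤ y → res α x ≤ res α y) ∧
    -- A6
    (∀ α < κ, ∀ x y : L, x ≤ y → (∀ β < α, rOf res β x y ∧ rOf res β y x) →
        rOf res α x y) :=
  model_of_B_axioms_general res B1 B2 B3 B4
end

section
/- Let L be a model satisfying A1–A6. For each α < κ, the set L|_α = {x|_α : x ∈ L}, with the order inherited from L, is a complete lattice in which the infimum of X ⊆ L|_α is (⨅ X)|_α and the supremum is (⨆ X)|_α, where ⨅ X and ⨆ X are taken in L. -/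
/-! The restriction `x ↦ x|_α` is monotone (A5) and idempotent: `x|_α` is the least `z` with
`x ⊑_α z`, and `x ⊑_α x|_α ⊑_α (x|_α)|_α` by transitivity, so `(x|_α)|_α` and `x|_α` bound each
other. The image of a monotone idempotent map on a complete lattice is complete, with infima and
suprema obtained by applying the map to those of the ambient lattice. -/

section Idempotent

variable {L : Type*} [CompleteLattice L] {f : L → L}

theorem isGreatest_map_sInf (hf : Monotone f) (hidem : ∀ y, f (f y) = f y) {X : Set L}
    (hX : X ⊆ Set.range f) : IsGreatest (lowerBounds X ∩ Set.range f) (f (sInf X)) := by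
  refine ⟨⟨fun x hx => ?_, ⟨_, rfl⟩⟩, ?_⟩
  · obtain ⟨y, rfl⟩ := hX hx
    calc f (sInf X) ≤ f (f y) := hf (sInf_le hx)
    _ = f y := hidem y
  · rintro _ ⟨hlb, y, rfl⟩
    calc f y = f (f y) := (hidem y).symm
    _ ≤ f (sInf X) := hf (le_sInf hlb)

theorem isLeast_map_sSup (hf : Monotone f) (hidem : ∀ y, f (f y) = f y) {X : Set L}
    (hX : X ⊆ Set.range f) : IsLeast (upperBounds X ∩ Set.range f) (f (sSup X)) :=
  isGreatest_map_sInf (L := Lᵒᵈ) hf.dual hidem hX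

end Idempotent

theorem map_map_eq_of_isLeast {α : Type*} [PartialOrder α] {R : α → α → Prop}
    (hrefl : ∀ x, R x x) (htrans : ∀ x y z, R x y → R y z → R x z) {f : α → α}
    (hf : ∀ x, IsLeast {z | R x z} (f x)) (y : α) : f (f y) = f y :=
  le_antisymm ((hf (f y)).2 (hrefl _)) ((hf y).2 (htrans _ _ _ (hf y).1 (hf (f y)).1))

theorem restricted_lattice_complete_general
    {κ : Ordinal} {L : Type*} [CompleteLattice L]
    (r : Ordinal → L → L → Prop)
    (hrefl : ∀ α < κ, ∀ x : L, r α x x)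
    (htrans : ∀ α < κ, ∀ x y z : L, r α x y → r α y z → r α x z)
    (res : Ordinal → L → L)
    (A3 : ∀ α < κ, ∀ x : L, (r α x (res α x) ∧ r α (res α x) x) ∧
        ∀ z : L, r α x z → res α x ≤ z)
    (A5 : ∀ α < κ, ∀ x y : L, x ≤ y → res α x ≤ res α y) :
    ∀ α < κ, ∀ X ⊆ Set.range (res α),
      res α (sInf X) ∈ Set.range (res α) ∧
      (∀ x ∈ X, res α (sInf X) ≤ x) ∧
      (∀ z ∈ Set.range (res α), (∀ x ∈ X, z ≤ x) → z ≤ res α (sInf X)) ∧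
      res α (sSup X) ∈ Set.range (res α) ∧
      (∀ x ∈ X, x ≤ res α (sSup X)) ∧
      (∀ z ∈ Set.range (res α), (∀ x ∈ X, x ≤ z) → res α (sSup X) ≤ z) := by
  intro α hα X hX
  have hmono : Monotone (res α) := fun x y => A5 α hα x y
  have hidem : ∀ y, res α (res α y) = res α y :=
    map_map_eq_of_isLeast (hrefl α hα) (htrans α hα)
      fun x => ⟨(A3 α hα x).1.1, fun z => (A3 α hα x).2 z⟩
  obtain ⟨⟨hinf_lb, hinf_mem⟩, hinf_greatest⟩ := isGreatest_map_sInf hmono hidem hX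
  obtain ⟨⟨hsup_ub, hsup_mem⟩, hsup_least⟩ := isLeast_map_sSup hmono hidem hX
  exact ⟨hinf_mem, hinf_lb, fun z hz hlb => hinf_greatest ⟨hlb, hz⟩,
    hsup_mem, hsup_ub, fun z hz hub => hsup_least ⟨hub, hz⟩⟩

/-- in a model (A1–A6), for each α < κ the set
L|_α = {x|_α : x ∈ L} with the inherited order is a complete lattice whose infima
are (⨅ X)|_α and suprema are (⨆ X)|_α (infima/suprema taken in L). -/
theorem restricted_lattice_complete
    {κ : Ordinal} (hκ : Order.IsSuccLimit κ) {L : Type*} [CompleteLattice L]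
    (r : Ordinal → L → L → Prop)
    (hrefl : ∀ α < κ, ∀ x : L, r α x x)
    (htrans : ∀ α < κ, ∀ x y z : L, r α x y → r α y z → r α x z)
    (A1 : ∀ α β : Ordinal, α < β → β < κ → ∀ x y : L, r β x y → r α x y ∧ r α y x)
    (A2 : ∀ x y : L, (∀ α < κ, r α x y ∧ r α y x) → x = y)
    (res : Ordinal → L → L)
    (A3 : ∀ α < κ, ∀ x : L, (r α x (res α x) ∧ r α (res α x) x) ∧
        ∀ z : L, r α x z → res α x ≤ z)
    (A4 : ∀ α < κ, ∀ (X : Set L) (y : L), X.Nonempty →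
        (∀ x ∈ X, r α x y ∧ r α y x) → r α (sSup X) y ∧ r α y (sSup X))
    (A5 : ∀ α < κ, ∀ x y : L, x ≤ y → res α x ≤ res α y)
    (A6 : ∀ α < κ, ∀ x y : L, x ≤ y → (∀ β < α, r β x y ∧ r β y x) → r α x y) :
    ∀ α < κ, ∀ X ⊆ Set.range (res α),
      res α (sInf X) ∈ Set.range (res α) ∧
      (∀ x ∈ X, res α (sInf X) ≤ x) ∧
      (∀ z ∈ Set.range (res α), (∀ x ∈ X, z ≤ x) → z ≤ res α (sInf X)) ∧
      res α (sSup X) ∈ Set.range (res α) ∧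
      (∀ x ∈ X, x ≤ res α (sSup X)) ∧
      (∀ z ∈ Set.range (res α), (∀ x ∈ X, x ≤ z) → res α (sSup X) ≤ z) :=
  restricted_lattice_complete_general r hrefl htrans res A3 A5
end

section
/- Let L be the model determined by the limit of an inverse system of complete lattices (L_α)_{α<κ} with locally completely additive projections, and let f : L → L be α-monotone for every α < κ. Then the set of fixed points of f is a complete lattice under the ordering ⊑; in particular f has a least fixed point x with respect to ⊑, and for every z with f(z) ⊑ z one has x ⊑ z. -/
universe u

/-- The preorder ⊑_α on the inverse limit. -/
def rel {κ : Ordinal} (L : Idx κ → Type u) [∀ α, CompleteLattice (L α)]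
    (α : Idx κ) (x y : ∀ γ, L γ) : Prop :=
  x α ≤ y α ∧ ∀ β < α, x β = y β

/-- The lexicographic order ⊑ : x ⊑ y iff x = y or x ⊏_α y for some α. -/
def strOrd {κ : Ordinal} (L : Idx κ → Type u) [∀ α, CompleteLattice (L α)]
    (x y : ∀ γ, L γ) : Prop :=
  x = y ∨ ∃ α : Idx κ, rel L α x y ∧ ¬ rel L α y x

/-!
The `⊑`-least upper bound `z` of a set `X` of fixed points is built level by level. Once `z` is
known below `α`, the candidates for `z α` form the fibre of the projections over `(z β)_{β<α}`:
it is nonempty, closed under infima (projections are upper adjoints) and under nonempty suprema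
(local complete additivity), and `f` induces on it a monotone map `f_α`. So `z α` is taken to be
the least prefixed point of `f_α` in the fibre above all `x α` with `x ∈ X` agreeing with `z`
below `α`; it is a fixed point by the Knaster–Tarski argument. Comparing `z` with a competitor
`w` at the first level where they differ shows that `z` lies `⊑`-below every fixed point above
`X`, and, for `X = ∅`, below every `w` with `f w ⊑ w`.
-/

section lfpAbove

variable {α : Type*} [CompleteLattice α]

def lfpAbove (P : Set α) (F : α → α) (Y : Set α) : α :=
  sInf {u ∈ P | F u ≤ u ∧ u ∈ upperBounds Y}

variable {P : Set α} {F : α → α} {Y : Set α} {t : α}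

theorem isLeast_lfpAbove (ht : IsGreatest P t) (hinf : ∀ T ⊆ P, T.Nonempty → sInf T ∈ P)
    (hmaps : Set.MapsTo F P P) (hmono : MonotoneOn F P) (hY : Y ⊆ P) :
    IsLeast {u ∈ P | F u ≤ u ∧ u ∈ upperBounds Y} (lfpAbove P F Y) := by
  have ht_mem : t ∈ {u ∈ P | F u ≤ u ∧ u ∈ upperBounds Y} :=
    ⟨ht.1, ht.2 (hmaps ht.1), fun y hy => ht.2 (hY hy)⟩
  have hz : lfpAbove P F Y ∈ P := hinf _ (fun u hu => hu.1) ⟨t, ht_mem⟩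
  refine ⟨⟨hz, le_sInf fun u hu => ?_, fun y hy => le_sInf fun u hu => hu.2.2 hy⟩,
    fun u hu => sInf_le hu⟩
  exact (hmono hz hu.1 (sInf_le hu)).trans hu.2.1

theorem map_lfpAbove (ht : IsGreatest P t) (hinf : ∀ T ⊆ P, T.Nonempty → sInf T ∈ P)
    (hmaps : Set.MapsTo F P P) (hmono : MonotoneOn F P) (hY : Y ⊆ P)
    (hfix : Y ⊆ Function.fixedPoints F) :
    F (lfpAbove P F Y) = lfpAbove P F Y := by
  obtain ⟨⟨hz, hFz, hzY⟩, hleast⟩ := isLeast_lfpAbove ht hinf hmaps hmono hY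
  refine le_antisymm hFz (hleast ⟨hmaps hz, hmono (hmaps hz) hz hFz, fun y hy => ?_⟩)
  rw [← hfix hy]
  exact hmono (hY hy) hz (hzY hy)

end lfpAbove

section strOrd

theorem exists_ne_forall_lt_eq {ι : Type*} [LT ι] [WellFoundedLT ι] {β : ι → Type*}
    {x y : ∀ i, β i} (hxy : x ≠ y) : ∃ μ, x μ ≠ y μ ∧ ∀ i < μ, x i = y i := by
  obtain ⟨μ, hμ, hmin⟩ := wellFounded_lt.has_min {i | x i ≠ y i} (Function.ne_iff.1 hxy)
  exact ⟨μ, hμ, fun i hi => not_not.1 fun hne => hmin i hne hi⟩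

variable {κ : Ordinal} {L : Idx κ → Type*} [∀ α, CompleteLattice (L α)] {x y : ∀ α, L α}

theorem strOrd_of_forall_le (H : ∀ μ, (∀ β < μ, x β = y β) → x μ ≤ y μ) : strOrd L x y := by
  by_cases hxy : x = y
  · exact Or.inl hxy
  obtain ⟨μ, hne, heq⟩ := exists_ne_forall_lt_eq hxy
  exact Or.inr ⟨μ, ⟨H μ heq, heq⟩, fun hyx => hne ((H μ heq).antisymm hyx.1)⟩

theorem le_of_strOrd (hxy : strOrd L x y) {μ : Idx κ} (heq : ∀ β < μ, x β = y β) :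
    x μ ≤ y μ := by
  rcases hxy with rfl | ⟨α, ⟨hle, hlt⟩, hnot⟩
  · exact le_rfl
  rcases lt_trichotomy μ α with hμα | rfl | hαμ
  · exact (hlt μ hμα).le
  · exact hle
  · exact absurd ⟨(heq α hαμ).ge, fun β hβ => (heq β (hβ.trans hαμ)).symm⟩ hnot

end strOrd

namespace LimitModel

variable {κ : Ordinal} {L : Idx κ → Type*} [∀ α, CompleteLattice (L α)]
  (h : ∀ α β : Idx κ, β < α → L α → L β)

structure IsLCAInverseSystem : Prop where
  gc : ∀ α β (hβα : β < α), ∃ k, GaloisConnection k (h α β hβα)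
  surjective : ∀ α β (hβα : β < α), Function.Surjective (h α β hβα)
  comp : ∀ (α β γ : Idx κ) (hγβ : γ < β) (hβα : β < α) (x : L α),
    h β γ hγβ (h α β hβα x) = h α γ (hγβ.trans hβα) x
  map_sSup : ∀ (α β : Idx κ) (hβα : β < α) (Y : Set (L α)), Y.Nonempty →
    ∀ x : L β, (∀ y ∈ Y, h α β hβα y = x) → h α β hβα (sSup Y) = x

def fibre (α : Idx κ) (p : ∀ β < α, L β) : Set (L α) :=
  {u | ∀ β (hβ : β < α), h α β hβ u = p β hβ}

def topFibre (α β : Idx κ) (hβα : β < α) (v : L β) : L α :=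
  sSup {w | h α β hβα w = v}

-- Any compatible sequence through `u` would serve to define `levelMap`, by `apply_eq_levelMap`.
noncomputable def extend (α : Idx κ) (u : L α) (γ : Idx κ) : L γ :=
  if hγ : γ < α then h α γ hγ u
  else if hαγ : α < γ then topFibre h γ α hαγ u
  else le_antisymm (not_lt.1 hγ) (not_lt.1 hαγ) ▸ u

theorem extend_of_lt {α γ : Idx κ} (u : L α) (hγ : γ < α) : extend h α u γ = h α γ hγ u :=
  dif_pos hγ

theorem extend_self (α : Idx κ) (u : L α) : extend h α u α = u := by
  simp only [extend, lt_irrefl, dite_false]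

theorem extend_of_gt {α γ : Idx κ} (u : L α) (hαγ : α < γ) :
    extend h α u γ = topFibre h γ α hαγ u := by
  rw [extend, dif_neg (asymm hαγ), dif_pos hαγ]

namespace IsLCAInverseSystem

variable {h}

theorem monotone (S : IsLCAInverseSystem h) (α β : Idx κ) (hβα : β < α) :
    Monotone (h α β hβα) :=
  let ⟨_, gc⟩ := S.gc α β hβα; gc.monotone_u

theorem map_topFibre (S : IsLCAInverseSystem h) (α β : Idx κ) (hβα : β < α) (v : L β) :
    h α β hβα (topFibre h α β hβα v) = v :=
  S.map_sSup α β hβα _ (S.surjective α β hβα v) v fun _ hw => hw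

theorem map_topFibre_of_lt (S : IsLCAInverseSystem h) {α β γ : Idx κ} (hαβ : α < β)
    (hβγ : β < γ) (u : L α) :
    h γ β hβγ (topFibre h γ α (hαβ.trans hβγ) u) = topFibre h β α hαβ u := by
  apply le_antisymm
  · apply le_sSup
    change h β α hαβ _ = u
    rw [S.comp, S.map_topFibre]
  · refine sSup_le fun v hv => ?_
    have hmem : topFibre h γ β hβγ v ∈ {w | h γ α (hαβ.trans hβγ) w = u} := by
      change _ = u
      rw [← S.comp γ β α hαβ hβγ, S.map_topFibre, hv]
    calc v = h γ β hβγ (topFibre h γ β hβγ v) := (S.map_topFibre γ β hβγ v).symm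
      _ ≤ _ := S.monotone γ β hβγ (le_sSup hmem)

theorem extend_mem_compat (S : IsLCAInverseSystem h) (α : Idx κ) (u : L α) :
    extend h α u ∈ Compat L h := by
  intro γ β hβγ
  rcases lt_trichotomy γ α with hγα | rfl | hαγ
  · rw [extend_of_lt h u hγα, extend_of_lt h u (hβγ.trans hγα), S.comp]
  · rw [extend_self, extend_of_lt h u hβγ]
  rw [extend_of_gt h u hαγ]
  rcases lt_trichotomy β α with hβα | rfl | hαβ
  · rw [extend_of_lt h u hβα, ← S.comp γ α β hβα hαγ, S.map_topFibre]
  · rw [extend_self, S.map_topFibre]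
  · rw [extend_of_gt h u hαβ, S.map_topFibre_of_lt hαβ hβγ]

theorem sInf_mem_fibre (S : IsLCAInverseSystem h) {α : Idx κ} (p : ∀ β < α, L β) :
    ∀ T ⊆ fibre h α p, T.Nonempty → sInf T ∈ fibre h α p := by
  intro T hT hne β hβ
  obtain ⟨_, gc⟩ := S.gc α β hβ
  obtain ⟨t, ht⟩ := hne
  rw [gc.u_sInf]
  exact le_antisymm ((iInf₂_le t ht).trans_eq (hT ht β hβ))
    (le_iInf₂ fun s hs => (hT hs β hβ).ge)

theorem sSup_mem_fibre (S : IsLCAInverseSystem h) {α : Idx κ} {p : ∀ β < α, L β}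
    {T : Set (L α)} (hT : T ⊆ fibre h α p) (hne : T.Nonempty) : sSup T ∈ fibre h α p :=
  fun β hβ => S.map_sSup α β hβ T hne _ fun _ ht => hT ht β hβ

theorem fibre_nonempty (S : IsLCAInverseSystem h) {α : Idx κ} {p : ∀ β < α, L β}
    (hp : ∀ β (hβ : β < α) γ (hγ : γ < β), h β γ hγ (p β hβ) = p γ (hγ.trans hβ)) :
    (fibre h α p).Nonempty := by
  refine ⟨⨅ (β) (hβ : β < α), topFibre h α β hβ (p β hβ), fun γ hγ => ?_⟩
  obtain ⟨_, gc⟩ := S.gc α γ hγ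
  rw [gc.u_iInf₂]
  refine le_antisymm ((iInf₂_le γ hγ).trans (S.map_topFibre α γ hγ _).le) (le_iInf₂ fun β hβ => ?_)
  rcases lt_trichotomy β γ with hβγ | rfl | hγβ
  · obtain ⟨w, hw⟩ := S.surjective α γ hγ (p γ hγ)
    have hmem : w ∈ {w | h α β hβ w = p β hβ} := by
      change _ = _
      rw [← S.comp α γ β hβγ hγ, hw, hp γ hγ β hβγ]
    exact hw ▸ S.monotone α γ hγ (le_sSup hmem)
  · exact (S.map_topFibre α β hβ _).ge
  · rw [← S.comp α β γ hγβ hβ, S.map_topFibre, hp β hβ γ hγβ]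

theorem isGreatest_sSup_fibre (S : IsLCAInverseSystem h) {α : Idx κ} {p : ∀ β < α, L β}
    (hp : ∀ β (hβ : β < α) γ (hγ : γ < β), h β γ hγ (p β hβ) = p γ (hγ.trans hβ)) :
    IsGreatest (fibre h α p) (sSup (fibre h α p)) :=
  ⟨S.sSup_mem_fibre subset_rfl (S.fibre_nonempty hp), fun _ hu => le_sSup hu⟩

end IsLCAInverseSystem

noncomputable def levelMap (f : (∀ α, L α) → ∀ α, L α) (α : Idx κ) (u : L α) : L α :=
  f (extend h α u) α

def IsLevelwiseMonotone (f : (∀ α, L α) → ∀ α, L α) : Prop :=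
  ∀ α, ∀ x ∈ Compat L h, ∀ y ∈ Compat L h, rel L α x y → rel L α (f x) (f y)

def extensionValues (X : Set (∀ α, L α)) (α : Idx κ) (p : ∀ β < α, L β) : Set (L α) :=
  (fun x => x α) '' {x ∈ X | ∀ β (hβ : β < α), x β = p β hβ}

noncomputable def fixedPointLub (f : (∀ α, L α) → ∀ α, L α) (X : Set (∀ α, L α)) :
    ∀ α, L α :=
  wellFounded_lt.fix fun α p => lfpAbove (fibre h α p) (levelMap h f α) (extensionValues X α p)

variable {h} {f : (∀ α, L α) → ∀ α, L α}

theorem apply_eq_levelMap (S : IsLCAInverseSystem h) (hf : IsLevelwiseMonotone h f)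
    {x : ∀ α, L α} (hx : x ∈ Compat L h) (α : Idx κ) : f x α = levelMap h f α (x α) := by
  have hext := S.extend_mem_compat α (x α)
  have hagree : ∀ β < α, x β = extend h α (x α) β := fun β hβ => by
    rw [extend_of_lt h _ hβ, hx α β hβ]
  exact le_antisymm
    (hf α x hx _ hext ⟨(extend_self h α _).ge, hagree⟩).1
    (hf α _ hext x hx ⟨(extend_self h α _).le, fun β hβ => (hagree β hβ).symm⟩).1

theorem monotoneOn_levelMap (S : IsLCAInverseSystem h) (hf : IsLevelwiseMonotone h f)
    (α : Idx κ) (p : ∀ β < α, L β) : MonotoneOn (levelMap h f α) (fibre h α p) := by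
  intro u hu u' hu' huu'
  refine (hf α _ (S.extend_mem_compat α u) _ (S.extend_mem_compat α u') ⟨?_, fun β hβ => ?_⟩).1
  · rwa [extend_self, extend_self]
  · rw [extend_of_lt h _ hβ, extend_of_lt h _ hβ, hu β hβ, hu' β hβ]

theorem mapsTo_levelMap (S : IsLCAInverseSystem h) (hfc : Set.MapsTo f (Compat L h) (Compat L h))
    (hf : IsLevelwiseMonotone h f) {α : Idx κ} {p : ∀ β < α, L β}
    (hp : ∀ β (hβ : β < α), levelMap h f β (p β hβ) = p β hβ) :
    Set.MapsTo (levelMap h f α) (fibre h α p) (fibre h α p) := by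
  intro u hu β hβ
  have hext := S.extend_mem_compat α u
  rw [levelMap, hfc hext α β hβ, apply_eq_levelMap S hf hext, extend_of_lt h u hβ, hu β hβ, hp]

variable {X : Set (∀ α, L α)}

theorem extensionValues_subset_fibre (hX : X ⊆ Compat L h) (α : Idx κ) (p : ∀ β < α, L β) :
    extensionValues X α p ⊆ fibre h α p := by
  rintro _ ⟨x, ⟨hxX, hxp⟩, rfl⟩ β hβ
  rw [hX hxX α β hβ, hxp]

theorem extensionValues_subset_fixedPoints (S : IsLCAInverseSystem h)
    (hf : IsLevelwiseMonotone h f) (hX : X ⊆ {x ∈ Compat L h | f x = x}) (α : Idx κ)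
    (p : ∀ β < α, L β) : extensionValues X α p ⊆ Function.fixedPoints (levelMap h f α) := by
  rintro _ ⟨x, ⟨hxX, -⟩, rfl⟩
  exact (apply_eq_levelMap S hf (hX hxX).1 α).symm.trans (congrFun (hX hxX).2 α)

theorem fixedPointLub_apply (α : Idx κ) :
    fixedPointLub h f X α = lfpAbove (fibre h α fun β _ => fixedPointLub h f X β)
      (levelMap h f α) (extensionValues X α fun β _ => fixedPointLub h f X β) :=
  wellFounded_lt.fix_eq _ α

theorem fixedPointLub_spec (S : IsLCAInverseSystem h)
    (hfc : Set.MapsTo f (Compat L h) (Compat L h)) (hf : IsLevelwiseMonotone h f)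
    (hX : X ⊆ {x ∈ Compat L h | f x = x}) (α : Idx κ) :
    IsLeast {u ∈ fibre h α (fun β _ => fixedPointLub h f X β) | levelMap h f α u ≤ u ∧
        u ∈ upperBounds (extensionValues X α fun β _ => fixedPointLub h f X β)}
      (fixedPointLub h f X α) ∧
    levelMap h f α (fixedPointLub h f X α) = fixedPointLub h f X α := by
  induction α using WellFoundedLT.induction with | _ α ih
  set p : ∀ β < α, L β := fun β _ => fixedPointLub h f X β
  have hp : ∀ β (hβ : β < α) γ (hγ : γ < β), h β γ hγ (p β hβ) = p γ (hγ.trans hβ) :=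
    fun β hβ => (ih β hβ).1.1.1
  have hgreatest := S.isGreatest_sSup_fibre hp
  have hinf := S.sInf_mem_fibre p
  have hmaps : Set.MapsTo (levelMap h f α) (fibre h α p) (fibre h α p) :=
    mapsTo_levelMap S hfc hf fun β hβ => (ih β hβ).2
  have hmono := monotoneOn_levelMap S hf α p
  have hY := extensionValues_subset_fibre (fun _ hx => (hX hx).1) α p
  rw [fixedPointLub_apply]
  exact ⟨isLeast_lfpAbove hgreatest hinf hmaps hmono hY,
    map_lfpAbove hgreatest hinf hmaps hmono hY
      (extensionValues_subset_fixedPoints S hf hX α p)⟩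

theorem fixedPointLub_mem_compat (S : IsLCAInverseSystem h)
    (hfc : Set.MapsTo f (Compat L h) (Compat L h)) (hf : IsLevelwiseMonotone h f)
    (hX : X ⊆ {x ∈ Compat L h | f x = x}) : fixedPointLub h f X ∈ Compat L h :=
  fun α => (fixedPointLub_spec S hfc hf hX α).1.1.1

theorem apply_fixedPointLub (S : IsLCAInverseSystem h)
    (hfc : Set.MapsTo f (Compat L h) (Compat L h)) (hf : IsLevelwiseMonotone h f)
    (hX : X ⊆ {x ∈ Compat L h | f x = x}) : f (fixedPointLub h f X) = fixedPointLub h f X :=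
  funext fun α => (apply_eq_levelMap S hf (fixedPointLub_mem_compat S hfc hf hX) α).trans
    (fixedPointLub_spec S hfc hf hX α).2

theorem strOrd_fixedPointLub (S : IsLCAInverseSystem h)
    (hfc : Set.MapsTo f (Compat L h) (Compat L h)) (hf : IsLevelwiseMonotone h f)
    (hX : X ⊆ {x ∈ Compat L h | f x = x}) {x : ∀ α, L α} (hx : x ∈ X) :
    strOrd L x (fixedPointLub h f X) :=
  strOrd_of_forall_le fun μ hμ => (fixedPointLub_spec S hfc hf hX μ).1.1.2.2 ⟨x, ⟨hx, hμ⟩, rfl⟩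

theorem fixedPointLub_strOrd (S : IsLCAInverseSystem h)
    (hfc : Set.MapsTo f (Compat L h) (Compat L h)) (hf : IsLevelwiseMonotone h f)
    (hX : X ⊆ {x ∈ Compat L h | f x = x}) {w : ∀ α, L α} (hw : w ∈ Compat L h)
    (hfw : strOrd L (f w) w) (hub : ∀ x ∈ X, strOrd L x w) :
    strOrd L (fixedPointLub h f X) w := by
  refine strOrd_of_forall_le fun μ hμ => (fixedPointLub_spec S hfc hf hX μ).1.2
    ⟨fun β hβ => (hw μ β hβ).trans (hμ β hβ).symm, ?_, ?_⟩
  · rw [← apply_eq_levelMap S hf hw]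
    refine le_of_strOrd hfw fun β hβ => ?_
    rw [apply_eq_levelMap S hf hw, ← hμ β hβ, (fixedPointLub_spec S hfc hf hX β).2]
  · rintro _ ⟨x, ⟨hxX, hxz⟩, rfl⟩
    exact le_of_strOrd (hub x hxX) fun β hβ => (hxz β hβ).trans (hμ β hβ)

end LimitModel

open LimitModel

theorem fixed_points_complete_lattice_general
    {κ : Ordinal}
    (L : Idx κ → Type u) [∀ α, CompleteLattice (L α)]
    (h : ∀ α β : Idx κ, β < α → L α → L β)
    (proj : ∀ (α β : Idx κ) (hβα : β < α), ∃ k : L β → L α,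
        Monotone (h α β hβα) ∧ Monotone k ∧
        (∀ x, h α β hβα (k x) = x) ∧ (∀ y, k (h α β hβα y) ≤ y))
    (comp : ∀ (α β γ : Idx κ) (hγβ : γ < β) (hβα : β < α) (x : L α),
        h β γ hγβ (h α β hβα x) = h α γ (hγβ.trans hβα) x)
    (lca : ∀ (α β : Idx κ) (hβα : β < α), ∀ Y : Set (L α), Y.Nonempty →
        ∀ x : L β, (∀ y ∈ Y, h α β hβα y = x) → h α β hβα (sSup Y) = x)
    (f : (∀ α, L α) → (∀ α, L α))
    (fS : ∀ x ∈ Compat L h, f x ∈ Compat L h)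
    (fmono : ∀ α : Idx κ, ∀ x ∈ Compat L h, ∀ y ∈ Compat L h,
        rel L α x y → rel L α (f x) (f y)) :
    -- the fixed points of f form a complete lattice under ⊑
    (∀ X ⊆ {x ∈ Compat L h | f x = x}, ∃ z ∈ {x ∈ Compat L h | f x = x},
        (∀ x ∈ X, strOrd L x z) ∧
        ∀ w ∈ {x ∈ Compat L h | f x = x}, (∀ x ∈ X, strOrd L x w) → strOrd L z w) ∧
    -- f has a ⊑-least fixed point x, and x ⊑ z whenever f z ⊑ z
    (∃ x ∈ {x ∈ Compat L h | f x = x},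
        (∀ z ∈ {x ∈ Compat L h | f x = x}, strOrd L x z) ∧
        ∀ z ∈ Compat L h, strOrd L (f z) z → strOrd L x z) := by
  have S : IsLCAInverseSystem h :=
    { gc := fun α β hβα =>
        let ⟨k, hh, hk, hhk, hkh⟩ := proj α β hβα
        ⟨k, GaloisConnection.monotone_intro hh hk (fun x => (hhk x).ge) hkh⟩
      surjective := fun α β hβα =>
        let ⟨k, _, _, hhk, _⟩ := proj α β hβα
        fun x => ⟨k x, hhk x⟩
      comp := comp
      map_sSup := lca }
  have lub_mem {X} (hX : X ⊆ {x ∈ Compat L h | f x = x}) :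
      fixedPointLub h f X ∈ {x ∈ Compat L h | f x = x} :=
    ⟨fixedPointLub_mem_compat S fS fmono hX, apply_fixedPointLub S fS fmono hX⟩
  have hempty := Set.empty_subset {x ∈ Compat L h | f x = x}
  have hvacuous (w : ∀ α, L α) : ∀ x ∈ (∅ : Set (∀ α, L α)), strOrd L x w :=
    fun _ => False.elim
  refine ⟨fun X hX => ⟨_, lub_mem hX, fun _ => strOrd_fixedPointLub S fS fmono hX,
      fun w hw => fixedPointLub_strOrd S fS fmono hX hw.1 (Or.inl hw.2)⟩,
    ⟨_, lub_mem hempty, fun w hw => ?_, fun z hz hfz => ?_⟩⟩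
  · exact fixedPointLub_strOrd S fS fmono hempty hw.1 (Or.inl hw.2) (hvacuous w)
  · exact fixedPointLub_strOrd S fS fmono hempty hz hfz (hvacuous z)

/-- if f is α-monotone for every α < κ on the limit model of an inverse
system with locally completely additive projections, then its fixed points form a
complete lattice under ⊑; in particular f has a ⊑-least fixed point x, and x ⊑ z
whenever f(z) ⊑ z. -/
theorem fixed_points_complete_lattice
    {κ : Ordinal} (hκ : Order.IsSuccLimit κ)
    (L : Idx κ → Type u) [∀ α, CompleteLattice (L α)]
    (h : ∀ α β : Idx κ, β < α → L α → L β)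
    (proj : ∀ (α β : Idx κ) (hβα : β < α), ∃ k : L β → L α,
        Monotone (h α β hβα) ∧ Monotone k ∧
        (∀ x, h α β hβα (k x) = x) ∧ (∀ y, k (h α β hβα y) ≤ y))
    (comp : ∀ (α β γ : Idx κ) (hγβ : γ < β) (hβα : β < α) (x : L α),
        h β γ hγβ (h α β hβα x) = h α γ (hγβ.trans hβα) x)
    (lca : ∀ (α β : Idx κ) (hβα : β < α), ∀ Y : Set (L α), Y.Nonempty →
        ∀ x : L β, (∀ y ∈ Y, h α β hβα y = x) → h α β hβα (sSup Y) = x)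
    (f : (∀ α, L α) → (∀ α, L α))
    (fS : ∀ x ∈ Compat L h, f x ∈ Compat L h)
    (fmono : ∀ α : Idx κ, ∀ x ∈ Compat L h, ∀ y ∈ Compat L h,
        rel L α x y → rel L α (f x) (f y)) :
    -- the fixed points of f form a complete lattice under ⊑
    (∀ X ⊆ {x ∈ Compat L h | f x = x}, ∃ z ∈ {x ∈ Compat L h | f x = x},
        (∀ x ∈ X, strOrd L x z) ∧
        ∀ w ∈ {x ∈ Compat L h | f x = x}, (∀ x ∈ X, strOrd L x w) → strOrd L z w) ∧
    -- f has a ⊑-least fixed point x, and x ⊑ z whenever f z ⊑ z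
    (∃ x ∈ {x ∈ Compat L h | f x = x},
        (∀ z ∈ {x ∈ Compat L h | f x = x}, strOrd L x z) ∧
        ∀ z ∈ Compat L h, strOrd L (f z) z → strOrd L x z) :=
  fixed_points_complete_lattice_general L h proj comp lca f fS fmono
end
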